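/- arXiv:2110.14248 — 2 statements merged into one kernel-verified Lean document; each statement's English description precedes it below -/
import Mathlib

section
/- For any policy class Π, optimal reference policy π_G (not necessarily in Π), and two joint distributions ρ^s, ρ^t on X×G: for every π ∈ Π, ε^{ρ^t}(π‖π_G) ≤ ε^{ρ^s}(π‖π_G) + d_{ΠΔΠ}(ρ^s, ρ^t) + λ_{s,t}, where λ_{s,t} = min_{π'∈Π} [ε^{ρ^s}(π'‖π_G) + ε^{ρ^t}(π'‖π_G)] (assume the minimum is attained by some π*_{s,t} ∈ Π), and d_{ΠΔΠ}(ρ^s, ρ^t) = sup_{π,π'∈Π} |ε^{ρ^s}(π‖π') − ε^{ρ^t}(π‖π')|. -/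
open MeasureTheory

noncomputable def tvDist {A : Type*} [MeasurableSpace A] (μ ν : Measure A) : ℝ :=
  ⨆ s : {s : Set A // MeasurableSet s}, |(μ (s : Set A)).toReal - (ν (s : Set A)).toReal|

noncomputable def avgTV {X G A : Type*} [MeasurableSpace X] [MeasurableSpace G]
    [MeasurableSpace A] (ρ : Measure (X × G)) (π₁ π₂ : X → G → Measure A) : ℝ :=
  ∫ p, tvDist (π₁ p.1 p.2) (π₂ p.1 p.2) ∂ρ

noncomputable def dPiDeltaPi {X G A : Type*} [MeasurableSpace X] [MeasurableSpace G]
    [MeasurableSpace A] (Pol : Set (X → G → Measure A)) (ρ ρ' : Measure (X × G)) : ℝ :=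
  ⨆ pp : Pol × Pol, |avgTV ρ pp.1.1 pp.2.1 - avgTV ρ' pp.1.1 pp.2.1|

section Aux

variable {A : Type*} [MeasurableSpace A]

instance : Nonempty {s : Set A // MeasurableSet s} := ⟨⟨∅, MeasurableSet.empty⟩⟩

lemma tv_pt_bound {μ ν : Measure A} (hμ : IsProbabilityMeasure μ) (hν : IsProbabilityMeasure ν)
    (s : {s : Set A // MeasurableSet s}) :
    |(μ (s : Set A)).toReal - (ν (s : Set A)).toReal| ≤ 1 := by
  have h1 : (μ (s : Set A)).toReal ≤ 1 := by
    simpa using ENNReal.toReal_mono (by norm_num) (prob_le_one (μ := μ) (s := (s : Set A)))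
  have h2 : (ν (s : Set A)).toReal ≤ 1 := by
    simpa using ENNReal.toReal_mono (by norm_num) (prob_le_one (μ := ν) (s := (s : Set A)))
  have h3 : 0 ≤ (μ (s : Set A)).toReal := ENNReal.toReal_nonneg
  have h4 : 0 ≤ (ν (s : Set A)).toReal := ENNReal.toReal_nonneg
  rw [abs_sub_le_iff]; constructor <;> linarith

lemma tv_bdd {μ ν : Measure A} (hμ : IsProbabilityMeasure μ) (hν : IsProbabilityMeasure ν) :
    BddAbove (Set.range fun s : {s : Set A // MeasurableSet s} =>
      |(μ (s : Set A)).toReal - (ν (s : Set A)).toReal|) :=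
  ⟨1, by rintro _ ⟨s, rfl⟩; exact tv_pt_bound hμ hν s⟩

lemma tvDist_nonneg (μ ν : Measure A) : 0 ≤ tvDist μ ν :=
  Real.iSup_nonneg fun _ => abs_nonneg _

lemma tvDist_le_one {μ ν : Measure A} (hμ : IsProbabilityMeasure μ)
    (hν : IsProbabilityMeasure ν) : tvDist μ ν ≤ 1 :=
  ciSup_le (tv_pt_bound hμ hν)

lemma tvDist_symm (μ ν : Measure A) : tvDist μ ν = tvDist ν μ := by
  unfold tvDist; congr 1; ext s; exact abs_sub_comm _ _

lemma tvDist_triangle {μ ν κ : Measure A} (hμ : IsProbabilityMeasure μ)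
    (hν : IsProbabilityMeasure ν) (hκ : IsProbabilityMeasure κ) :
    tvDist μ κ ≤ tvDist μ ν + tvDist ν κ := by
  apply ciSup_le
  intro s
  calc |(μ (s : Set A)).toReal - (κ (s : Set A)).toReal|
      ≤ |(μ (s : Set A)).toReal - (ν (s : Set A)).toReal| +
        |(ν (s : Set A)).toReal - (κ (s : Set A)).toReal| := abs_sub_le _ _ _
    _ ≤ tvDist μ ν + tvDist ν κ :=
        add_le_add (le_ciSup (tv_bdd hμ hν) s) (le_ciSup (tv_bdd hν hκ) s)

end Aux

section Aux2

variable {X G A : Type*} [MeasurableSpace X] [MeasurableSpace G] [MeasurableSpace A]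

lemma avgTV_nonneg (ρ : Measure (X × G)) (π₁ π₂ : X → G → Measure A) :
    0 ≤ avgTV ρ π₁ π₂ :=
  integral_nonneg fun p => tvDist_nonneg _ _

lemma avgTV_le_one (ρ : Measure (X × G)) [IsProbabilityMeasure ρ] {π₁ π₂ : X → G → Measure A}
    (h₁ : ∀ x g, IsProbabilityMeasure (π₁ x g)) (h₂ : ∀ x g, IsProbabilityMeasure (π₂ x g)) :
    avgTV ρ π₁ π₂ ≤ 1 := by
  by_cases h : Integrable (fun p : X × G => tvDist (π₁ p.1 p.2) (π₂ p.1 p.2)) ρ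
  · calc avgTV ρ π₁ π₂ ≤ ∫ _p : X × G, (1 : ℝ) ∂ρ :=
        integral_mono h (integrable_const 1) fun p => tvDist_le_one (h₁ _ _) (h₂ _ _)
      _ = 1 := by simp
  · unfold avgTV; rw [integral_undef h]; norm_num

lemma avgTV_symm (ρ : Measure (X × G)) (π₁ π₂ : X → G → Measure A) :
    avgTV ρ π₁ π₂ = avgTV ρ π₂ π₁ := by
  unfold avgTV; congr 1; ext p; exact tvDist_symm _ _

lemma avgTV_triangle (ρ : Measure (X × G)) {π₁ π₂ π₃ : X → G → Measure A}
    (h₁ : ∀ x g, IsProbabilityMeasure (π₁ x g)) (h₂ : ∀ x g, IsProbabilityMeasure (π₂ x g))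
    (h₃ : ∀ x g, IsProbabilityMeasure (π₃ x g))
    (i13 : Integrable (fun p : X × G => tvDist (π₁ p.1 p.2) (π₃ p.1 p.2)) ρ)
    (i12 : Integrable (fun p : X × G => tvDist (π₁ p.1 p.2) (π₂ p.1 p.2)) ρ)
    (i23 : Integrable (fun p : X × G => tvDist (π₂ p.1 p.2) (π₃ p.1 p.2)) ρ) :
    avgTV ρ π₁ π₃ ≤ avgTV ρ π₁ π₂ + avgTV ρ π₂ π₃ := by
  unfold avgTV
  rw [← integral_add i12 i23]
  exact integral_mono i13 (i12.add i23) fun p =>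
    tvDist_triangle (h₁ _ _) (h₂ _ _) (h₃ _ _)

end Aux2

/-- single-source domain adaptation bound:
ε^{ρt}(π‖π_G) ≤ ε^{ρs}(π‖π_G) + d_{ΠΔΠ}(ρs, ρt) + λ_{s,t}, where λ_{s,t} is the joint
optimal error attained by some π*_{s,t} ∈ Π. -/
theorem single_source_bound {X G A : Type*} [MeasurableSpace X] [MeasurableSpace G]
    [MeasurableSpace A] (Pol : Set (X → G → Measure A))
    (hPol : ∀ π' ∈ Pol, ∀ x g, IsProbabilityMeasure (π' x g))
    (πG : X → G → Measure A) (hπG : ∀ x g, IsProbabilityMeasure (πG x g))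
    (ρs ρt : Measure (X × G)) [IsProbabilityMeasure ρs] [IsProbabilityMeasure ρt]
    (πstar : X → G → Measure A) (hπstar : πstar ∈ Pol)
    -- π*_{s,t} attains the minimum of ε^{ρs}(·‖π_G) + ε^{ρt}(·‖π_G) over Π:
    (hmin : ∀ π' ∈ Pol,
      avgTV ρs πstar πG + avgTV ρt πstar πG ≤ avgTV ρs π' πG + avgTV ρt π' πG)
    (π : X → G → Measure A) (hπ : π ∈ Pol)
    -- all relevant expectations are assumed finite:
    (hInt : ∀ π₁ ∈ insert πG Pol, ∀ π₂ ∈ insert πG Pol, ∀ ρ ∈ ({ρs, ρt} : Set (Measure (X × G))),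
      Integrable (fun p : X × G => tvDist (π₁ p.1 p.2) (π₂ p.1 p.2)) ρ) :
    avgTV ρt π πG ≤ avgTV ρs π πG + dPiDeltaPi Pol ρs ρt +
      (avgTV ρs πstar πG + avgTV ρt πstar πG) := by
  have hπm : π ∈ insert πG Pol := Set.mem_insert_of_mem _ hπ
  have hπsm : πstar ∈ insert πG Pol := Set.mem_insert_of_mem _ hπstar
  have hπGm : πG ∈ insert πG Pol := Set.mem_insert _ _
  have hρs : ρs ∈ ({ρs, ρt} : Set (Measure (X × G))) := Set.mem_insert _ _
  have hρt : ρt ∈ ({ρs, ρt} : Set (Measure (X × G))) := Set.mem_insert_of_mem _ rfl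
  have hpπ := hPol π hπ
  have hpπs := hPol πstar hπstar
  -- step 1: ε^t(π,πG) ≤ ε^t(π,π*) + ε^t(π*,πG)
  have step1 : avgTV ρt π πG ≤ avgTV ρt π πstar + avgTV ρt πstar πG :=
    avgTV_triangle ρt hpπ hpπs hπG (hInt π hπm πG hπGm ρt hρt)
      (hInt π hπm πstar hπsm ρt hρt) (hInt πstar hπsm πG hπGm ρt hρt)
  -- step 2: ε^t(π,π*) ≤ ε^s(π,π*) + d
  have step2 : avgTV ρt π πstar ≤ avgTV ρs π πstar + dPiDeltaPi Pol ρs ρt := by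
    have hb : BddAbove (Set.range fun pp : Pol × Pol =>
        |avgTV ρs pp.1.1 pp.2.1 - avgTV ρt pp.1.1 pp.2.1|) := by
      refine ⟨2, ?_⟩
      rintro _ ⟨pp, rfl⟩
      have h1 : 0 ≤ avgTV ρs pp.1.1 pp.2.1 := avgTV_nonneg _ _ _
      have h2 : avgTV ρs pp.1.1 pp.2.1 ≤ 1 :=
        avgTV_le_one ρs (hPol _ pp.1.2) (hPol _ pp.2.2)
      have h3 : 0 ≤ avgTV ρt pp.1.1 pp.2.1 := avgTV_nonneg _ _ _
      have h4 : avgTV ρt pp.1.1 pp.2.1 ≤ 1 :=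
        avgTV_le_one ρt (hPol _ pp.1.2) (hPol _ pp.2.2)
      rw [abs_sub_le_iff]; constructor <;> linarith
    have hle : avgTV ρt π πstar - avgTV ρs π πstar ≤ dPiDeltaPi Pol ρs ρt := by
      calc avgTV ρt π πstar - avgTV ρs π πstar
          ≤ |avgTV ρs π πstar - avgTV ρt π πstar| := by
            rw [abs_sub_comm]; exact le_abs_self _
        _ ≤ dPiDeltaPi Pol ρs ρt := le_ciSup hb (⟨⟨π, hπ⟩, ⟨πstar, hπstar⟩⟩ : Pol × Pol)
    linarith
  -- step 3: ε^s(π,π*) ≤ ε^s(π,πG) + ε^s(π*,πG)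
  have step3 : avgTV ρs π πstar ≤ avgTV ρs π πG + avgTV ρs πstar πG := by
    have := avgTV_triangle ρs hpπ hπG hpπs (hInt π hπm πstar hπsm ρs hρs)
      (hInt π hπm πG hπGm ρs hρs) (hInt πG hπGm πstar hπsm ρs hρs)
    rwa [avgTV_symm ρs πG πstar] at this
  linarith
end

section
/- In a goal-conditioned MDP with discount γ ∈ [0,1), for any two goal-conditioned policies π₁, π₂ and any goal g, the discounted state occupancy measures p^Δ_{π_i}(s|g) := (1−γ) Σ_{t≥0} γ^t p_{π_i}(s_t=s|g) satisfy, for every state s: |p^Δ_{π₁}(s|g) − p^Δ_{π₂}(s|g)| ≤ (2γ/(1−γ)) · E_{s'∼p^Δ_{π₁}(·|g)}[D_TV(π₁(·|s',g), π₂(·|s',g))]. -/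
open Finset

/-- Time-`t` state marginal under a stationary policy `π` in a finite MDP. -/
def marg {S A : Type*} [Fintype S] [Fintype A]
    (p : S → A → S → ℝ) (ρ0 : S → ℝ) (π : S → A → ℝ) : ℕ → S → ℝ
  | 0 => ρ0
  | (t + 1) => fun s' => ∑ s, ∑ a, marg p ρ0 π t s * π s a * p s a s'

/-- Discounted state occupancy `p^Δ_π(s) = (1-γ) Σ_t γ^t p_π(s_t = s)`. -/
noncomputable def pDelta {S A : Type*} [Fintype S] [Fintype A]
    (γ : ℝ) (p : S → A → S → ℝ) (ρ0 : S → ℝ) (π : S → A → ℝ) (s : S) : ℝ :=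
  (1 - γ) * ∑' t : ℕ, γ ^ t * marg p ρ0 π t s

/-- Total variation distance between two finitely supported distributions. -/
noncomputable def dtv {A : Type*} [Fintype A] (μ ν : A → ℝ) : ℝ := (1 / 2) * ∑ a, |μ a - ν a|

section aux
variable {S A : Type*} [Fintype S] [Fintype A]
    (γ : ℝ) (p : S → A → S → ℝ) (ρ0 : S → ℝ) (π : S → A → ℝ)

lemma marg_nonneg (hp : ∀ s a s', 0 ≤ p s a s') (hρ : ∀ s, 0 ≤ ρ0 s)
    (hπ : ∀ s a, 0 ≤ π s a) : ∀ t s, 0 ≤ marg p ρ0 π t s := by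
  intro t
  induction t with
  | zero => exact hρ
  | succ t ih =>
    intro s'
    exact Finset.sum_nonneg fun s _ => Finset.sum_nonneg fun a _ =>
      mul_nonneg (mul_nonneg (ih s) (hπ s a)) (hp s a s')

lemma marg_sum (hp_sum : ∀ s a, ∑ s', p s a s' = 1) (hρ_sum : ∑ s, ρ0 s = 1)
    (hπ_sum : ∀ s, ∑ a, π s a = 1) : ∀ t, ∑ s, marg p ρ0 π t s = 1 := by
  intro t
  induction t with
  | zero => exact hρ_sum
  | succ t ih =>
    show ∑ s', ∑ s, ∑ a, marg p ρ0 π t s * π s a * p s a s' = 1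
    rw [Finset.sum_comm]
    have : ∀ s, ∑ s', ∑ a, marg p ρ0 π t s * π s a * p s a s'
        = marg p ρ0 π t s := by
      intro s
      rw [Finset.sum_comm]
      have : ∀ a, ∑ s', marg p ρ0 π t s * π s a * p s a s'
          = marg p ρ0 π t s * π s a := by
        intro a
        rw [← Finset.mul_sum, hp_sum s a, mul_one]
      simp_rw [this, ← Finset.mul_sum, hπ_sum s, mul_one]
    simp_rw [this, ih]

lemma marg_le_one (hp : ∀ s a s', 0 ≤ p s a s') (hρ : ∀ s, 0 ≤ ρ0 s)
    (hπ : ∀ s a, 0 ≤ π s a)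
    (hp_sum : ∀ s a, ∑ s', p s a s' = 1) (hρ_sum : ∑ s, ρ0 s = 1)
    (hπ_sum : ∀ s, ∑ a, π s a = 1) : ∀ t s, marg p ρ0 π t s ≤ 1 := by
  intro t s
  calc marg p ρ0 π t s ≤ ∑ s', marg p ρ0 π t s' :=
        Finset.single_le_sum (fun s' _ => marg_nonneg p ρ0 π hp hρ hπ t s')
          (Finset.mem_univ s)
    _ = 1 := marg_sum p ρ0 π hp_sum hρ_sum hπ_sum t

lemma marg_summable (hγ : 0 ≤ γ) (hγ1 : γ < 1)
    (hp : ∀ s a s', 0 ≤ p s a s') (hρ : ∀ s, 0 ≤ ρ0 s)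
    (hπ : ∀ s a, 0 ≤ π s a)
    (hp_sum : ∀ s a, ∑ s', p s a s' = 1) (hρ_sum : ∑ s, ρ0 s = 1)
    (hπ_sum : ∀ s, ∑ a, π s a = 1) (s : S) :
    Summable (fun t => γ ^ t * marg p ρ0 π t s) := by
  apply Summable.of_nonneg_of_le
    (fun t => mul_nonneg (pow_nonneg hγ t) (marg_nonneg p ρ0 π hp hρ hπ t s))
    (fun t => ?_) (summable_geometric_of_lt_one hγ hγ1)
  calc γ ^ t * marg p ρ0 π t s ≤ γ ^ t * 1 := by
        exact mul_le_mul_of_nonneg_left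
          (marg_le_one p ρ0 π hp hρ hπ hp_sum hρ_sum hπ_sum t s) (pow_nonneg hγ t)
    _ = γ ^ t := mul_one _

lemma pDelta_nonneg (hγ1 : γ < 1) (hp : ∀ s a s', 0 ≤ p s a s') (hρ : ∀ s, 0 ≤ ρ0 s)
    (hπ : ∀ s a, 0 ≤ π s a) (hγ : 0 ≤ γ) (s : S) : 0 ≤ pDelta γ p ρ0 π s :=
  mul_nonneg (by linarith) (tsum_nonneg fun t =>
    mul_nonneg (pow_nonneg hγ t) (marg_nonneg p ρ0 π hp hρ hπ t s))

lemma pDelta_fixed_point (hγ : 0 ≤ γ) (hγ1 : γ < 1)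
    (hp : ∀ s a s', 0 ≤ p s a s') (hρ : ∀ s, 0 ≤ ρ0 s)
    (hπ : ∀ s a, 0 ≤ π s a)
    (hp_sum : ∀ s a, ∑ s', p s a s' = 1) (hρ_sum : ∑ s, ρ0 s = 1)
    (hπ_sum : ∀ s, ∑ a, π s a = 1) (s' : S) :
    pDelta γ p ρ0 π s' =
      (1 - γ) * ρ0 s' + γ * ∑ s, ∑ a, pDelta γ p ρ0 π s * π s a * p s a s' := by
  have hsum := fun s => marg_summable γ p ρ0 π hγ hγ1 hp hρ hπ hp_sum hρ_sum hπ_sum s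
  have key : (∑' t : ℕ, γ ^ t * marg p ρ0 π t s')
      = ρ0 s' + γ * ∑ s, ∑ a, (∑' t : ℕ, γ ^ t * marg p ρ0 π t s) * π s a * p s a s' := by
    rw [Summable.tsum_eq_zero_add (hsum s')]
    congr 1
    · simp [marg]
    · have h1 : ∀ t : ℕ, γ ^ (t + 1) * marg p ρ0 π (t + 1) s'
          = ∑ s, ∑ a, (γ ^ t * marg p ρ0 π t s) * (γ * (π s a * p s a s')) := by
        intro t
        show γ ^ (t+1) * (∑ s, ∑ a, marg p ρ0 π t s * π s a * p s a s') = _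
        rw [Finset.mul_sum]
        congr 1; ext s
        rw [Finset.mul_sum]
        congr 1; ext a
        ring
      simp_rw [h1]
      rw [Summable.tsum_finsetSum (fun s _ => ?_)]
      · rw [Finset.mul_sum]
        congr 1; ext s
        rw [Summable.tsum_finsetSum (fun a _ => ?_)]
        · rw [Finset.mul_sum]
          congr 1; ext a
          rw [tsum_mul_right]
          ring
        · exact (hsum s).mul_right _
      · exact summable_sum fun a _ => (hsum s).mul_right _
  show (1 - γ) * _ = _
  rw [key, mul_add]
  congr 1
  simp only [pDelta]
  rw [mul_left_comm]
  congr 1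
  rw [Finset.mul_sum]
  refine Finset.sum_congr rfl fun s _ => ?_
  rw [Finset.mul_sum]
  refine Finset.sum_congr rfl fun a _ => ?_
  ring

end aux

lemma occupancy_bound_aux {S A : Type*} [Fintype S] [Fintype A]
    (γ : ℝ) (hγ : 0 ≤ γ) (hγ1 : γ < 1)
    (p : S → A → S → ℝ) (ρ0 : S → ℝ)
    (hp : ∀ s a s', 0 ≤ p s a s') (hp_sum : ∀ s a, ∑ s', p s a s' = 1)
    (hρ : ∀ s, 0 ≤ ρ0 s) (hρ_sum : ∑ s, ρ0 s = 1)
    (π π' : S → A → ℝ)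
    (hπn : ∀ s a, 0 ≤ π s a) (hπs : ∀ s, ∑ a, π s a = 1)
    (hπn' : ∀ s a, 0 ≤ π' s a) (hπs' : ∀ s, ∑ a, π' s a = 1)
    (s : S) :
    |pDelta γ p ρ0 π s - pDelta γ p ρ0 π' s| ≤
      (2 * γ / (1 - γ)) * ∑ s', pDelta γ p ρ0 π s' * dtv (π s') (π' s') := by
  set f := pDelta γ p ρ0 π with hf
  set f' := pDelta γ p ρ0 π' with hf'
  have hfn : ∀ s, 0 ≤ f s := fun s => pDelta_nonneg γ p ρ0 π hγ1 hp hρ hπn hγ s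
  have hfp : ∀ s' : S, f s' = (1 - γ) * ρ0 s' + γ * ∑ s, ∑ a, f s * π s a * p s a s' :=
    fun s' => pDelta_fixed_point γ p ρ0 π hγ hγ1 hp hρ hπn hp_sum hρ_sum hπs s'
  have hfp' : ∀ s' : S, f' s' = (1 - γ) * ρ0 s' + γ * ∑ s, ∑ a, f' s * π' s a * p s a s' :=
    fun s' => pDelta_fixed_point γ p ρ0 π' hγ hγ1 hp hρ hπn' hp_sum hρ_sum hπs' s'
  have hΔ : ∀ s', f s' - f' s' = γ * ∑ s, ∑ a,
      (f s * (π s a - π' s a) + (f s - f' s) * π' s a) * p s a s' := by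
    intro s'
    rw [hfp s', hfp' s']
    have h : ∀ s : S, ∀ a : A, (f s * (π s a - π' s a) + (f s - f' s) * π' s a) * p s a s'
        = f s * π s a * p s a s' - f' s * π' s a * p s a s' := fun s a => by ring
    simp_rw [h, Finset.sum_sub_distrib, mul_sub]
    ring
  have habs : ∀ s', |f s' - f' s'| ≤ γ * ∑ s, ∑ a,
      (f s * |π s a - π' s a| + |f s - f' s| * π' s a) * p s a s' := by
    intro s'
    rw [hΔ s', abs_mul, abs_of_nonneg hγ]
    refine mul_le_mul_of_nonneg_left ?_ hγ
    calc |∑ s, ∑ a, (f s * (π s a - π' s a) + (f s - f' s) * π' s a) * p s a s'|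
        ≤ ∑ s, |∑ a, (f s * (π s a - π' s a) + (f s - f' s) * π' s a) * p s a s'| :=
          Finset.abs_sum_le_sum_abs _ _
      _ ≤ ∑ s, ∑ a, |(f s * (π s a - π' s a) + (f s - f' s) * π' s a) * p s a s'| :=
          Finset.sum_le_sum fun s _ => Finset.abs_sum_le_sum_abs _ _
      _ ≤ ∑ s, ∑ a, (f s * |π s a - π' s a| + |f s - f' s| * π' s a) * p s a s' := by
          refine Finset.sum_le_sum fun s _ => Finset.sum_le_sum fun a _ => ?_
          rw [abs_mul, abs_of_nonneg (hp s a s')]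
          refine mul_le_mul_of_nonneg_right ?_ (hp s a s')
          calc |f s * (π s a - π' s a) + (f s - f' s) * π' s a|
              ≤ |f s * (π s a - π' s a)| + |(f s - f' s) * π' s a| := abs_add_le _ _
            _ = f s * |π s a - π' s a| + |f s - f' s| * π' s a := by
                rw [abs_mul, abs_mul, abs_of_nonneg (hfn s), abs_of_nonneg (hπn' s a)]
  have hsum' : ∑ s', |f s' - f' s'| ≤
      γ * (∑ s, |f s - f' s|) + 2 * γ * ∑ s, f s * dtv (π s) (π' s) := by
    calc ∑ s', |f s' - f' s'|
        ≤ ∑ s', γ * ∑ s, ∑ a,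
          (f s * |π s a - π' s a| + |f s - f' s| * π' s a) * p s a s' :=
          Finset.sum_le_sum fun s' _ => habs s'
      _ = γ * ∑ s, ∑ a, (f s * |π s a - π' s a| + |f s - f' s| * π' s a) := by
          rw [← Finset.mul_sum, Finset.sum_comm]
          congr 1
          refine Finset.sum_congr rfl fun s _ => ?_
          rw [Finset.sum_comm]
          refine Finset.sum_congr rfl fun a _ => ?_
          rw [← Finset.mul_sum, hp_sum s a, mul_one]
      _ = γ * ∑ s, (f s * (2 * dtv (π s) (π' s)) + |f s - f' s|) := by
          congr 1
          refine Finset.sum_congr rfl fun s _ => ?_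
          rw [Finset.sum_add_distrib, ← Finset.mul_sum, ← Finset.mul_sum, hπs' s,
            mul_one, dtv]
          ring
      _ = γ * (∑ s, |f s - f' s|) + 2 * γ * ∑ s, f s * dtv (π s) (π' s) := by
          rw [Finset.sum_add_distrib, mul_add, add_comm]
          congr 1
          rw [Finset.mul_sum, Finset.mul_sum]
          exact Finset.sum_congr rfl fun s _ => by ring
  have h1γ : 0 < 1 - γ := by linarith
  have hT : ∑ s', |f s' - f' s'| ≤
      (2 * γ / (1 - γ)) * ∑ s', f s' * dtv (π s') (π' s') := by
    rw [div_mul_eq_mul_div, le_div_iff₀ h1γ]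
    nlinarith [hsum']
  calc |f s - f' s| ≤ ∑ s', |f s' - f' s'| :=
        Finset.single_le_sum (f := fun s' => |f s' - f' s'|)
          (fun s' _ => abs_nonneg _) (Finset.mem_univ s)
    _ ≤ _ := hT


/-- the discounted state occupancy measures of two goal-conditioned policies
differ by at most `(2γ/(1-γ))` times the average total variation distance of their action
distributions under the occupancy measure of the first policy. -/
theorem discounted_occupancy_bound {S A Gt : Type*} [Fintype S] [Fintype A]
    (γ : ℝ) (hγ : 0 ≤ γ) (hγ1 : γ < 1)
    (p : S → A → S → ℝ) (ρ0 : S → ℝ)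
    (hp_nonneg : ∀ s a s', 0 ≤ p s a s') (hp_sum : ∀ s a, ∑ s', p s a s' = 1)
    (hρ0_nonneg : ∀ s, 0 ≤ ρ0 s) (hρ0_sum : ∑ s, ρ0 s = 1)
    (π₁ π₂ : S → Gt → A → ℝ) (g : Gt)
    (hπ₁_nonneg : ∀ s g' a, 0 ≤ π₁ s g' a) (hπ₁_sum : ∀ s g', ∑ a, π₁ s g' a = 1)
    (hπ₂_nonneg : ∀ s g' a, 0 ≤ π₂ s g' a) (hπ₂_sum : ∀ s g', ∑ a, π₂ s g' a = 1)
    (s : S) :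
    |pDelta γ p ρ0 (fun s' a => π₁ s' g a) s - pDelta γ p ρ0 (fun s' a => π₂ s' g a) s| ≤
      (2 * γ / (1 - γ)) *
        ∑ s', pDelta γ p ρ0 (fun s'' a => π₁ s'' g a) s' *
          dtv (fun a => π₁ s' g a) (fun a => π₂ s' g a) :=
  occupancy_bound_aux γ hγ hγ1 p ρ0 hp_nonneg hp_sum hρ0_nonneg hρ0_sum
    (fun s' a => π₁ s' g a) (fun s' a => π₂ s' g a)
    (fun s' a => hπ₁_nonneg s' g a) (fun s' => hπ₁_sum s' g)
    (fun s' a => hπ₂_nonneg s' g a) (fun s' => hπ₂_sum s' g) s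
end
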